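/- Let T be the unit regular tetrahedron in ℝ³. For every x > 1/2, the inverted scaled tetrahedron −x•T cannot hide behind T; in particular, the orthogonal projection of T onto the plane perpendicular to (0,0,1) (an equilateral triangle of side 1) contains no translate of the corresponding projection of −x•T. Hence 1/2 is the largest scale factor s such that −s•T can hide behind T. -/

import Mathlib

open scoped Pointwise
open MeasureTheory

/-- Orthogonal projection of a point onto the hyperplane `u^⊥`. -/
noncomputable def proj {n : ℕ} (u x : EuclideanSpace ℝ (Fin n)) : EuclideanSpace ℝ (Fin n) :=
  (Submodule.orthogonalProjection (ℝ ∙ u)ᗮ x : EuclideanSpace ℝ (Fin n))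

/-- `A` can hide behind `B`: for every unit direction `u` there is a translation vector in
`u^⊥` moving the shadow of `A` inside the shadow of `B`. -/
def HidesBehind {n : ℕ} (A B : Set (EuclideanSpace ℝ (Fin n))) : Prop :=
  ∀ u : EuclideanSpace ℝ (Fin n), ‖u‖ = 1 →
    ∃ v ∈ (ℝ ∙ u)ᗮ, v +ᵥ (proj u '' A) ⊆ proj u '' B

/-- The unit regular tetrahedron in `ℝ³`. -/
noncomputable def T : Set (EuclideanSpace ℝ (Fin 3)) :=
  convexHull ℝ {!₂[0, 0, 0], !₂[1, 0, 0], !₂[1/2, Real.sqrt 3 / 2, 0],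
    !₂[1/2, Real.sqrt 3 / 6, Real.sqrt (2/3)]}

/-- The vertical direction `(0, 0, 1)`, perpendicular to the base face of `T`
(hence parallel to that face's plane of projection). -/
noncomputable def e₃ : EuclideanSpace ℝ (Fin 3) := !₂[0, 0, 1]

/-!
Every shadow of a tetrahedron is the convex hull of four affinely dependent points `q i` of a
plane. Taking an affine relation `∑ w i • q i = 0` with `|w m|` maximal writes `q m` as an
affine combination of the other three points with all coefficients at most `1`, i.e. `q m` lies
in the triangle whose medial triangle is spanned by the other three. The homothety of ratio
`-1/2` about their centroid maps that triangle onto the triangle of the other three points, so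
`-1/2` times the shadow fits into the shadow.

Conversely, projected along `e₃` the tetrahedron casts its base triangle of side `1`, and a
translate of `-x` times an equilateral triangle of side `1` fits inside it only if `x ≤ 1/2`.
-/

open Set

local notation "ℝ³" => EuclideanSpace ℝ (Fin 3)

section AffineDependence

variable {E : Type*} [AddCommGroup E] [Module ℝ E]

theorem exists_eq_sum_smul_of_not_affineIndependent {ι : Type*} [Fintype ι] {q : ι → E}
    (hq : ¬ AffineIndependent ℝ q) :
    ∃ m, ∃ l : ι → ℝ, l m = 0 ∧ (∀ j, l j ≤ 1) ∧ ∑ j, l j = 1 ∧ ∑ j, l j • q j = q m := by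
  classical
  obtain ⟨w, hw, hwq, j, hj⟩ :
      ∃ w : ι → ℝ, ∑ i, w i = 0 ∧ ∑ i, w i • q i = 0 ∧ ∃ j, w j ≠ 0 := by
    simp only [affineIndependent_iff_of_fintype, not_forall] at hq
    obtain ⟨w, hw, hwq, j, hj⟩ := hq
    exact ⟨w, hw, by rwa [Finset.weightedVSub_eq_linear_combination _ hw] at hwq, j, hj⟩
  obtain ⟨m, -, hm⟩ := Finset.univ.exists_max_image (fun i => |w i|) ⟨j, Finset.mem_univ j⟩
  have hwm : w m ≠ 0 := by
    intro h
    have := hm j (Finset.mem_univ j)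
    rw [h, abs_zero] at this
    exact hj (abs_nonpos_iff.mp this)
  refine ⟨m, fun i => (if i = m then 1 else 0) - w i / w m, by simp [hwm], fun i => ?_, ?_, ?_⟩
  · have : -(w i / w m) ≤ 1 :=
      calc -(w i / w m) ≤ |w i / w m| := neg_le_abs _
        _ = |w i| / |w m| := abs_div _ _
        _ ≤ 1 := div_le_one_of_le₀ (hm i (Finset.mem_univ i)) (abs_nonneg _)
    dsimp only
    split_ifs with h
    · simp [h, hwm]
    · linarith
  · simp [Finset.sum_sub_distrib, ← Finset.sum_div, hw]
  · simp [sub_smul, Finset.sum_sub_distrib, div_eq_inv_mul, mul_smul, ← Finset.smul_sum, hwq]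

theorem half_sum_sub_sum_smul_mem_convexHull (q : Fin 4 → E) {m : Fin 4} {l : Fin 4 → ℝ}
    (hlm : l m = 0) (hl : ∀ j, l j ≤ 1) (hsum : ∑ j, l j = 1) :
    (1/2 : ℝ) • (∑ j, q j - q m) - (1/2 : ℝ) • ∑ j, l j • q j ∈ convexHull ℝ (range q) := by
  classical
  have hweights : (1/2 : ℝ) • (∑ j, q j - q m) - (1/2 : ℝ) • ∑ j, l j • q j =
      ∑ j, ((1 - (if j = m then 1 else 0) - l j) / 2) • q j := by
    simp only [div_eq_inv_mul, mul_smul, ← Finset.smul_sum, sub_smul, Finset.sum_sub_distrib,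
      ite_smul, one_smul, zero_smul, Finset.sum_ite_eq', Finset.mem_univ, if_true]
    module
  rw [hweights]
  refine (convex_convexHull ℝ _).sum_mem (fun j _ => ?_) ?_
    (fun j _ => subset_convexHull ℝ _ (mem_range_self j))
  · split_ifs with h
    · simp [h, hlm]
    · linarith [hl j]
  · simp [← Finset.sum_div, Finset.sum_sub_distrib, hsum]
    norm_num

theorem exists_vadd_neg_half_smul_convexHull_subset {q : Fin 4 → E}
    (hq : ¬ AffineIndependent ℝ q) :
    ∃ v : E, v +ᵥ (-(1/2 : ℝ)) • convexHull ℝ (range q) ⊆ convexHull ℝ (range q) := by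
  obtain ⟨m, l, hlm, hl, hsum, hlq⟩ := exists_eq_sum_smul_of_not_affineIndependent hq
  refine ⟨(1/2 : ℝ) • (∑ j, q j - q m), ?_⟩
  rw [← convexHull_smul, ← convexHull_vadd, smul_set_range, vadd_set_range]
  refine convexHull_min (range_subset_iff.2 fun i => ?_) (convex_convexHull ℝ _)
  by_cases hi : i = m
  · convert half_sum_sub_sum_smul_mem_convexHull q hlm hl hsum using 1
    rw [hlq, hi, vadd_eq_add, neg_smul, ← sub_eq_add_neg]
  · convert half_sum_sub_sum_smul_mem_convexHull q (l := Pi.single i 1)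
      (Pi.single_eq_of_ne' hi 1) (fun j => ?_) (by simp) using 1
    · simp [Pi.single_apply, ite_smul, vadd_eq_add, sub_eq_add_neg]
    · by_cases hj : j = i <;> simp [hj]

end AffineDependence

theorem neg_half_smul_convexHull_hidesBehind (p : Fin 4 → ℝ³) :
    HidesBehind ((-(1/2 : ℝ)) • convexHull ℝ (range p)) (convexHull ℝ (range p)) := by
  intro u hu
  set K := (ℝ ∙ u)ᗮ
  set P := K.orthogonalProjectionOnto
  have : Fact (Module.finrank ℝ ℝ³ = 2 + 1) := ⟨by simp⟩
  have hK : Module.finrank ℝ K = 2 :=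
    Submodule.finrank_orthogonal_span_singleton (ne_zero_of_norm_ne_zero (hu.trans_ne one_ne_zero))
  have hq : ¬ AffineIndependent ℝ (P ∘ p) := fun h => by
    have h4 := h.card_le_finrank_succ
    have := Submodule.finrank_le (vectorSpan ℝ (range (P ∘ p)))
    rw [Fintype.card_fin] at h4
    omega
  obtain ⟨v, hv⟩ := exists_vadd_neg_half_smul_convexHull_subset hq
  have hproj : ∀ S, proj u '' S = K.subtype '' (P '' S) := fun S => by rw [image_image]; rfl
  have hhull : P '' convexHull ℝ (range p) = convexHull ℝ (range (P ∘ p)) := by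
    rw [range_comp]
    exact P.toLinearMap.image_convexHull _
  refine ⟨v, v.2, ?_⟩
  rw [hproj, hproj, image_smul_set, hhull]
  exact (image_vadd_distrib K.subtype v _).symm.subset.trans (image_mono hv)

theorem T_eq_convexHull_range :
    T = convexHull ℝ (range ![!₂[0, 0, 0], !₂[1, 0, 0], !₂[1/2, √3 / 2, 0],
      !₂[1/2, √3 / 6, √(2/3)]]) := by
  simp only [T, Matrix.range_cons, Matrix.range_empty, union_empty, singleton_union]

theorem norm_e₃ : ‖e₃‖ = 1 := by
  simp [EuclideanSpace.norm_eq, e₃, Fin.sum_univ_three]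

theorem proj_e₃_apply (y : ℝ³) {i : Fin 3} (hi : i ≠ 2) : proj e₃ y i = y i := by
  have hproj : proj e₃ y = y - y 2 • e₃ := by
    refine Submodule.eq_starProjection_of_mem_orthogonal ?_ ?_
    · rw [Submodule.mem_orthogonal_singleton_iff_inner_right, PiLp.inner_apply]
      simp [Fin.sum_univ_three, e₃]
    · rw [sub_sub_cancel]
      exact Submodule.le_orthogonal_orthogonal _
        (Submodule.smul_mem _ _ (Submodule.mem_span_singleton_self _))
  fin_cases i <;> simp_all [e₃]

theorem T_subset_baseTriangle :
    T ⊆ {y | 0 ≤ y 1 ∧ 0 ≤ √3 * y 0 - y 1 ∧ √3 * y 0 + y 1 ≤ √3} := by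
  have hs : 0 ≤ √3 := Real.sqrt_nonneg 3
  refine convexHull_min ?_ ((convex_halfSpace_ge (f := fun y : ℝ³ => y 1) ?_ 0).inter
    ((convex_halfSpace_ge (f := fun y : ℝ³ => √3 * y 0 - y 1) ?_ 0).inter
    (convex_halfSpace_le (f := fun y : ℝ³ => √3 * y 0 + y 1) ?_ √3)))
  · rintro z (rfl | rfl | rfl | rfl) <;>
      simp only [mem_ofPred_eq, Matrix.cons_val_zero, Matrix.cons_val_one] <;>
      exact ⟨by positivity, by linarith, by linarith⟩
  all_goals constructor <;> intros <;> simp <;> ring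

theorem not_vadd_proj_e₃_neg_smul_T_subset {x : ℝ} (hx : 1/2 < x) (v : ℝ³) :
    ¬ v +ᵥ proj e₃ '' ((-x) • T) ⊆ proj e₃ '' T := by
  intro hsub
  have hshadow : ∀ y ∈ T, 0 ≤ v 1 - x * y 1 ∧ 0 ≤ √3 * (v 0 - x * y 0) - (v 1 - x * y 1) ∧
      √3 * (v 0 - x * y 0) + (v 1 - x * y 1) ≤ √3 := by
    intro y hy
    obtain ⟨z, hz, hzy⟩ := hsub (vadd_mem_vadd_set (mem_image_of_mem _ (smul_mem_smul_set hy)))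
    have hcoord : ∀ i ≠ 2, z i = v i - x * y i := fun i hi => by
      rw [← proj_e₃_apply z hi, hzy, vadd_eq_add, PiLp.add_apply, proj_e₃_apply _ hi]
      simp [sub_eq_add_neg]
    simpa only [mem_ofPred_eq, hcoord 0 (by decide), hcoord 1 (by decide)] using
      T_subset_baseTriangle hz
  have hA := (hshadow !₂[0, 0, 0] (subset_convexHull ℝ _ (by simp))).2.2
  have hB := (hshadow !₂[1, 0, 0] (subset_convexHull ℝ _ (by simp))).2.1
  have hC := (hshadow !₂[1/2, √3 / 2, 0] (subset_convexHull ℝ _ (by simp))).1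
  simp only [Fin.isValue, Matrix.cons_val_zero, mul_zero, sub_zero, Matrix.cons_val_one, mul_one,
    sub_nonneg, one_div] at hA hB hC
  nlinarith [Real.sqrt_pos.2 (show (0:ℝ) < 3 by norm_num)]

theorem half_is_largest_inverted_scale :
    (∀ x : ℝ, 1/2 < x →
      ¬ HidesBehind ((-x) • T) T ∧
      ¬ ∃ v ∈ (ℝ ∙ e₃)ᗮ,
          v +ᵥ (proj e₃ '' ((-x) • T)) ⊆ proj e₃ '' T) ∧
    IsGreatest {s : ℝ | HidesBehind ((-s) • T) T} (1/2) := by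
  have hidden : HidesBehind ((-(1/2 : ℝ)) • T) T :=
    T_eq_convexHull_range ▸ neg_half_smul_convexHull_hidesBehind _
  have not_hidden : ∀ x : ℝ, 1/2 < x → ¬ HidesBehind ((-x) • T) T := fun x hx h => by
    obtain ⟨v, -, hv⟩ := h e₃ norm_e₃
    exact not_vadd_proj_e₃_neg_smul_T_subset hx v hv
  refine ⟨fun x hx => ⟨not_hidden x hx, fun ⟨v, _, hv⟩ =>
    not_vadd_proj_e₃_neg_smul_T_subset hx v hv⟩, hidden, fun s hs => ?_⟩
  by_contra h
  exact not_hidden s (not_le.mp h) hs
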